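/- arXiv:2102.08544 — 2 statements merged into one kernel-verified Lean document; each statement's English description precedes it below -/
import Mathlib

section
/- Let a and b be positive real numbers and define f(x) = (e^{ax} − 1)(e^{b/x} − 1) for x > 0. Then f is strictly monotonically increasing on the interval [√(b/a), +∞); indeed its first derivative f'(x) = e^{ax + b/x}·(a − b/x² − a e^{-b/x} + (b/x²)e^{-ax}) vanishes at x = √(b/a) and is strictly positive for x > √(b/a). -/
/-!
Differentiating gives `f' x = exp (a x + b / x) · g x` with
`x · g x = v (1 - exp (-u)) - u (1 - exp (-v))`, where `u = b / x` and `v = a x`.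
Since `t ↦ (1 - exp (-t)) / t` is a chord slope of the convex function `exp` through `0`,
it is strictly decreasing, so `g x` has the sign of `v - u = (a x² - b) / x`: it vanishes at
`x = √(b / a)` and is positive beyond.
-/

open Real Set

theorem one_sub_exp_neg_div_lt_one_sub_exp_neg_div {u v : ℝ} (hu : u ≠ 0) (hv : v ≠ 0)
    (huv : u < v) : (1 - exp (-v)) / v < (1 - exp (-u)) / u := by
  have := strictConvexOn_exp.secant_strict_mono (mem_univ 0) (mem_univ (-v)) (mem_univ (-u))
    (neg_ne_zero.2 hv) (neg_ne_zero.2 hu) (neg_lt_neg huv)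
  rwa [exp_zero, sub_zero, sub_zero, ← neg_div_neg_eq, neg_neg, neg_sub,
    ← neg_div_neg_eq (exp (-u) - 1), neg_neg, neg_sub] at this

noncomputable def transmissionEnergy (a b : ℝ) (x : ℝ) : ℝ :=
  (exp (a * x) - 1) * (exp (b / x) - 1)

noncomputable def transmissionEnergyDerivFactor (a b : ℝ) (x : ℝ) : ℝ :=
  a - b / x ^ 2 - a * exp (-(b / x)) + (b / x ^ 2) * exp (-(a * x))

theorem hasDerivAt_transmissionEnergy (a b : ℝ) {x : ℝ} (hx : x ≠ 0) :
    HasDerivAt (transmissionEnergy a b)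
      (exp (a * x + b / x) * transmissionEnergyDerivFactor a b x) x := by
  have hexp_ax : HasDerivAt (fun x => exp (a * x) - 1) (exp (a * x) * a) x :=
    (((hasDerivAt_id x).const_mul a).exp.sub_const 1).congr_deriv (by simp)
  have hdiv : HasDerivAt (fun x => b / x) (-(b / x ^ 2)) x := by
    simpa [div_eq_mul_inv] using (hasDerivAt_inv hx).const_mul b
  refine (hexp_ax.mul (hdiv.exp.sub_const 1)).congr_deriv ?_
  simp only [transmissionEnergyDerivFactor, exp_add, exp_neg]
  field_simp
  ring

theorem mul_transmissionEnergyDerivFactor (a b : ℝ) {x : ℝ} (hx : x ≠ 0) :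
    x * transmissionEnergyDerivFactor a b x
      = a * x * (1 - exp (-(b / x))) - b / x * (1 - exp (-(a * x))) := by
  simp only [transmissionEnergyDerivFactor]
  field_simp
  ring

theorem transmissionEnergyDerivFactor_eq_zero (a b : ℝ) {x : ℝ} (hx : x ≠ 0)
    (h : b / x = a * x) : transmissionEnergyDerivFactor a b x = 0 := by
  have hsq : b / x ^ 2 = a := by
    rw [pow_two, ← div_div, h, mul_div_assoc, div_self hx, mul_one]
  simp only [transmissionEnergyDerivFactor, hsq, h]
  ring

theorem transmissionEnergyDerivFactor_pos {a b x : ℝ} (hb : 0 < b) (hx : 0 < x)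
    (h : b / x < a * x) : 0 < transmissionEnergyDerivFactor a b x := by
  have hu : 0 < b / x := div_pos hb hx
  have hslope := one_sub_exp_neg_div_lt_one_sub_exp_neg_div hu.ne' (hu.trans h).ne' h
  rw [div_lt_div_iff₀ (hu.trans h) hu] at hslope
  have := mul_transmissionEnergyDerivFactor a b hx.ne'
  refine pos_of_mul_pos_right (a := x) ?_ hx.le
  linarith

theorem div_sqrt_div_eq_mul_sqrt_div {a b : ℝ} (ha : 0 < a) (hb : 0 < b) :
    b / √(b / a) = a * √(b / a) := by
  have hs : 0 < √(b / a) := sqrt_pos.2 (div_pos hb ha)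
  rw [div_eq_iff hs.ne', mul_assoc, mul_self_sqrt (div_pos hb ha).le, mul_div_cancel₀ b ha.ne']

theorem div_lt_mul_of_sqrt_div_lt {a b x : ℝ} (ha : 0 < a) (hx : √(b / a) < x) :
    b / x < a * x := by
  have hx0 : 0 < x := (sqrt_nonneg _).trans_lt hx
  rw [div_lt_iff₀ hx0, mul_assoc, ← div_lt_iff₀' ha, ← sq]
  exact (sqrt_lt' hx0).1 hx

theorem statement14 (a b : ℝ) (ha : 0 < a) (hb : 0 < b) :
    StrictMonoOn (fun x : ℝ => (Real.exp (a * x) - 1) * (Real.exp (b / x) - 1))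
      (Ici (Real.sqrt (b / a))) ∧
    (∀ x : ℝ, 0 < x →
      deriv (fun x : ℝ => (Real.exp (a * x) - 1) * (Real.exp (b / x) - 1)) x
        = Real.exp (a * x + b / x)
          * (a - b / x ^ 2 - a * Real.exp (-(b / x)) + (b / x ^ 2) * Real.exp (-(a * x)))) ∧
    deriv (fun x : ℝ => (Real.exp (a * x) - 1) * (Real.exp (b / x) - 1))
      (Real.sqrt (b / a)) = 0 ∧
    ∀ x : ℝ, Real.sqrt (b / a) < x →
      0 < deriv (fun x : ℝ => (Real.exp (a * x) - 1) * (Real.exp (b / x) - 1)) x := by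
  have hs : 0 < √(b / a) := sqrt_pos.2 (div_pos hb ha)
  have hderiv {x : ℝ} (hx : 0 < x) := (hasDerivAt_transmissionEnergy a b hx.ne').deriv
  have hderiv_pos {x : ℝ} (hx : √(b / a) < x) : 0 < deriv (transmissionEnergy a b) x := by
    rw [hderiv (hs.trans hx)]
    exact mul_pos (exp_pos _)
      (transmissionEnergyDerivFactor_pos hb (hs.trans hx) (div_lt_mul_of_sqrt_div_lt ha hx))
  refine ⟨?_, fun x hx => hderiv hx, ?_, fun x hx => hderiv_pos hx⟩
  · refine strictMonoOn_of_deriv_pos (convex_Ici _) (fun x hx => ?_) (fun x hx => ?_)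
    · exact (hasDerivAt_transmissionEnergy a b (hs.trans_le hx).ne').continuousAt
        |>.continuousWithinAt
    · exact hderiv_pos (by rwa [interior_Ici] at hx)
  · exact (hderiv hs).trans (by
      rw [transmissionEnergyDerivFactor_eq_zero a b hs.ne' (div_sqrt_div_eq_mul_sqrt_div ha hb),
        mul_zero])
end

section
/- Let u, v, λ be positive real numbers and set h = 1/u + 1/v, g = 1/λ + u/(v(u+v+λ)) − h, q = 1/(uv) − (v+λ)/(v(u+v+λ)²), and l = v/u + (u+v)/(u+v+λ). Define for t > 0 the average AoI Δ̄(t) = ( h²e^{2ut} + (h(g − t) − 1/(uv))e^{ut} + g/λ + q )/( h e^{ut} + g ) + ( (l + λt)e^{ut} − l + u/(u+v+λ) )/( λe^{ut} + v ). Then Δ̄ is strictly monotonically increasing on (0, +∞). -/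
/-!
Each of the two summands is increasing by itself. Put `E = exp (u * t) ≥ 1`. The quotient-rule
numerator of the derivative of the second summand is
`E * (lam ^ 2 * E + lam * v + u * v * (l + lam * t) + lam * u * (v / u + v / (u + v + lam)))`,
visibly positive. For the first summand it is `E * (c₂ E² + c₁ E + c₀ - g h u t)` with `c₂ = u h³`,
and `g` may have either sign. The bounds `1 - 1 / E ≤ u t ≤ E - 1` eliminate `t` (the upper one
when `g ≥ 0`, the lower one after multiplying by `E` when `g < 0`), leaving a polynomial in
`E - 1` whose coefficients are rational functions of `u, v, lam` with positive numerators.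
-/

open Real Set

noncomputable def aoiBarT (u v lam : ℝ) (t : ℝ) : ℝ :=
  let h := 1 / u + 1 / v
  let g := 1 / lam + u / (v * (u + v + lam)) - h
  let q := 1 / (u * v) - (v + lam) / (v * (u + v + lam) ^ 2)
  let l := v / u + (u + v) / (u + v + lam)
  (h ^ 2 * Real.exp (2 * u * t) + (h * (g - t) - 1 / (u * v)) * Real.exp (u * t)
      + g / lam + q) / (h * Real.exp (u * t) + g)
    + ((l + lam * t) * Real.exp (u * t) - l + u / (u + v + lam))
      / (lam * Real.exp (u * t) + v)

theorem strictMonoOn_div_of_hasDerivAt {s : Set ℝ} {N D N' D' : ℝ → ℝ} (hs : Convex ℝ s)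
    (hN : ∀ x ∈ s, HasDerivAt N (N' x) x) (hD : ∀ x ∈ s, HasDerivAt D (D' x) x)
    (hD₀ : ∀ x ∈ s, D x ≠ 0) (hW : ∀ x ∈ s, 0 < N' x * D x - N x * D' x) :
    StrictMonoOn (fun x => N x / D x) s := by
  have hq : ∀ x ∈ s, HasDerivAt (fun x => N x / D x) ((N' x * D x - N x * D' x) / D x ^ 2) x :=
    fun x hx => (hN x hx).div (hD x hx) (hD₀ x hx)
  refine strictMonoOn_of_deriv_pos hs (fun x hx => (hq x hx).continuousAt.continuousWithinAt)
    fun x hx => ?_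
  have hxs := interior_subset hx
  rw [(hq x hxs).deriv]
  exact div_pos (hW x hxs) (sq_pos_of_ne_zero (hD₀ x hxs))

theorem quadratic_sub_mul_pos_of_log_bounds {c₂ c₁ c₀ k E s : ℝ} (hc₂ : 0 ≤ c₂)
    (h₀ : 0 < c₂ + c₁ + c₀) (h₁ : 0 ≤ 2 * c₂ + c₁ - k) (h₂ : 0 ≤ 3 * c₂ + 2 * c₁ + c₀ - k)
    (h₃ : 0 ≤ 3 * c₂ + c₁) (hE : 1 ≤ E) (hs : s ≤ E - 1) (hs' : E - 1 ≤ E * s) :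
    0 < c₂ * E ^ 2 + c₁ * E + c₀ - k * s := by
  have hE₁ : 0 ≤ E - 1 := sub_nonneg.2 hE
  rcases le_or_gt 0 k with hk | hk
  · calc 0 < (c₂ + c₁ + c₀) + c₂ * (E - 1) ^ 2 + (E - 1) * (2 * c₂ + c₁ - k) := by positivity
      _ = c₂ * E ^ 2 + c₁ * E + c₀ - k * (E - 1) := by ring
      _ ≤ c₂ * E ^ 2 + c₁ * E + c₀ - k * s := by gcongr
  · have hk' : 0 ≤ -k := by linarith
    refine pos_of_mul_pos_right (a := E) ?_ (by linarith)
    calc 0 < (c₂ + c₁ + c₀) + (E - 1) * (3 * c₂ + 2 * c₁ + c₀ - k) + c₂ * (E - 1) ^ 3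
          + (E - 1) ^ 2 * (3 * c₂ + c₁) := by positivity
      _ = E * (c₂ * E ^ 2 + c₁ * E + c₀) + -k * (E - 1) := by ring
      _ ≤ E * (c₂ * E ^ 2 + c₁ * E + c₀) + -k * (E * s) := by gcongr
      _ = E * (c₂ * E ^ 2 + c₁ * E + c₀ - k * s) := by ring

noncomputable def aoiH (u v : ℝ) : ℝ := 1 / u + 1 / v

noncomputable def aoiG (u v lam : ℝ) : ℝ := 1 / lam + u / (v * (u + v + lam)) - aoiH u v

noncomputable def aoiQ (u v lam : ℝ) : ℝ := 1 / (u * v) - (v + lam) / (v * (u + v + lam) ^ 2)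

noncomputable def aoiL (u v lam : ℝ) : ℝ := v / u + (u + v) / (u + v + lam)

noncomputable def meanSqOverTwiceMean (u v lam t : ℝ) : ℝ :=
  (aoiH u v ^ 2 * exp (u * t) ^ 2
      + (aoiH u v * (aoiG u v lam - t) - 1 / (u * v)) * exp (u * t)
      + aoiG u v lam / lam + aoiQ u v lam) / (aoiH u v * exp (u * t) + aoiG u v lam)

noncomputable def meanServiceTime (u v lam t : ℝ) : ℝ :=
  ((aoiL u v lam + lam * t) * exp (u * t) - aoiL u v lam + u / (u + v + lam))
    / (lam * exp (u * t) + v)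

theorem aoiBarT_eq_add (u v lam : ℝ) :
    aoiBarT u v lam = fun t => meanSqOverTwiceMean u v lam t + meanServiceTime u v lam t := by
  funext t
  have hsq : exp (2 * u * t) = exp (u * t) ^ 2 := by rw [← exp_nat_mul]; ring_nf
  simp only [aoiBarT, hsq]
  rfl

theorem hasDerivAt_exp_mul (u t : ℝ) : HasDerivAt (fun t => exp (u * t)) (exp (u * t) * u) t := by
  simpa using ((hasDerivAt_id t).const_mul u).exp

theorem meanSqOverTwiceMean_deriv_factor_pos {u v lam t : ℝ} (hu : 0 < u) (hv : 0 < v)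
    (hlam : 0 < lam) (ht : 0 ≤ t) :
    let h := aoiH u v
    let g := aoiG u v lam
    0 < u * h ^ 3 * exp (u * t) ^ 2 + (2 * u * h ^ 2 * g - h ^ 2) * exp (u * t)
      + (u * h * g ^ 2 - h * g - g / v - h * u * (g / lam + aoiQ u v lam)) - g * h * (u * t) := by
  intro h g
  have hut : 0 ≤ u * t := by positivity
  have hupper : u * t ≤ exp (u * t) - 1 := by linarith [add_one_le_exp (u * t)]
  have hlower : exp (u * t) - 1 ≤ exp (u * t) * (u * t) := by
    have hneg := add_one_le_exp (-(u * t))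
    have hinv : exp (u * t) * exp (-(u * t)) = 1 := by rw [← exp_add, add_neg_cancel, exp_zero]
    nlinarith [exp_pos (u * t)]
  refine quadratic_sub_mul_pos_of_log_bounds ?_ ?_ ?_ ?_ ?_ (one_le_exp hut) hupper hlower
  all_goals simp only [h, g, aoiG, aoiH, aoiQ]; field_simp; ring_nf; positivity

theorem strictMonoOn_meanSqOverTwiceMean {u v lam : ℝ} (hu : 0 < u) (hv : 0 < v)
    (hlam : 0 < lam) : StrictMonoOn (meanSqOverTwiceMean u v lam) (Ici 0) := by
  have hh : 0 < aoiH u v := by simp only [aoiH]; positivity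
  have hhg : 0 < aoiH u v + aoiG u v lam := by simp only [aoiG, add_sub_cancel]; positivity
  unfold meanSqOverTwiceMean
  set h := aoiH u v
  set g := aoiG u v lam
  refine strictMonoOn_div_of_hasDerivAt (convex_Ici 0)
    (N' := fun t => 2 * u * h ^ 2 * exp (u * t) ^ 2
      + (u * (h * (g - t) - 1 / (u * v)) - h) * exp (u * t))
    (D' := fun t => h * (exp (u * t) * u)) (fun t _ => ?_) (fun t _ => ?_) (fun t ht => ?_)
    (fun t ht => ?_)
  · have hE := hasDerivAt_exp_mul u t
    have hlin : HasDerivAt (fun t => h * (g - t) - 1 / (u * v)) (-h) t := by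
      simpa using (((hasDerivAt_id t).const_sub g).const_mul h).sub_const (1 / (u * v))
    refine ((((hE.fun_pow 2).const_mul (h ^ 2)).add (hlin.mul hE)).add_const (g / lam)).add_const
      (aoiQ u v lam) |>.congr_deriv ?_
    push_cast
    ring
  · exact ((hasDerivAt_exp_mul u t).const_mul h).add_const g
  · have hE : 0 ≤ exp (u * t) - 1 := sub_nonneg.2 (one_le_exp (mul_nonneg hu.le ht))
    exact ne_of_gt (by linarith [mul_nonneg hh.le hE])
  · refine (mul_pos (exp_pos (u * t))
      (meanSqOverTwiceMean_deriv_factor_pos hu hv hlam ht)).trans_eq ?_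
    simp only [h, g]
    field_simp
    ring

theorem strictMonoOn_meanServiceTime {u v lam : ℝ} (hu : 0 < u) (hv : 0 < v) (hlam : 0 < lam) :
    StrictMonoOn (meanServiceTime u v lam) (Ici 0) := by
  set l := aoiL u v lam
  have hl : l - u / (u + v + lam) = v / u + v / (u + v + lam) := by
    simp only [l, aoiL]; field_simp; ring
  refine strictMonoOn_div_of_hasDerivAt (convex_Ici 0)
    (N' := fun t => lam * exp (u * t) + (l + lam * t) * (exp (u * t) * u))
    (D' := fun t => lam * (exp (u * t) * u)) (fun t _ => ?_) (fun t _ => ?_)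
    (fun t _ => by positivity) (fun t ht => ?_)
  · have hlin : HasDerivAt (fun t => l + lam * t) lam t := by
      simpa using ((hasDerivAt_id t).const_mul lam).const_add l
    exact ((hlin.mul (hasDerivAt_exp_mul u t)).sub_const l).add_const _
  · exact ((hasDerivAt_exp_mul u t).const_mul lam).add_const v
  · have ht : (0 : ℝ) ≤ t := ht
    have hl₀ : 0 < l := by simp only [l, aoiL]; positivity
    calc 0 < exp (u * t) * (lam ^ 2 * exp (u * t) + lam * v + u * v * (l + lam * t)
          + lam * u * (v / u + v / (u + v + lam))) := by positivity
      _ = _ := by rw [← hl]; ring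

theorem statement19 (u v lam : ℝ) (hu : 0 < u) (hv : 0 < v) (hlam : 0 < lam) :
    StrictMonoOn (aoiBarT u v lam) (Ioi 0) := by
  rw [aoiBarT_eq_add]
  exact ((strictMonoOn_meanSqOverTwiceMean hu hv hlam).add_monotone
    (strictMonoOn_meanServiceTime hu hv hlam).monotoneOn).mono Ioi_subset_Ici_self
end
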